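/- arXiv:2404.16588 — 4 statements merged into one kernel-verified Lean document; each statement's English description precedes it below -/
import Mathlib

section
/- For any binary relation R on a set X, the equivalence closure of the complement of the symmetric closure of R equals the complement of the largest apartness relation contained in the symmetric closure of R (the apartness interior). -/
/-- An apartness relation: irreflexive, symmetric, cotransitive. -/
def IsApartness {X : Type*} (A : X → X → Prop) : Prop :=
  (∀ x, ¬ A x x) ∧ (∀ x y, A x y → A y x) ∧ (∀ x y, A x y → ∀ z, A x z ∨ A y z)

/-- The apartness interior of `S`: the largest apartness relation contained in `S`,
realised as the union of all apartness relations contained in `S`. -/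
def apartnessInterior {X : Type*} (S : X → X → Prop) : X → X → Prop :=
  fun x y => ∃ A : X → X → Prop, IsApartness A ∧ (∀ a b, A a b → S a b) ∧ A x y

/-!
Complementation exchanges apartness relations and equivalence relations: irreflexivity,
symmetry and cotransitivity of `A` are reflexivity, symmetry and transitivity of `¬ A`, and,
classically, conversely. Since complementation also reverses inclusion, the largest apartness
relation inside any relation `S` is the complement of the smallest equivalence relation
containing `¬ S`.
-/

section
variable {X : Type*}

theorem IsApartness.equivalence_compl {A : X → X → Prop} (hA : IsApartness A) :
    Equivalence fun a b => ¬ A a b := by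
  obtain ⟨hirrefl, hsymm, hcotrans⟩ := hA
  refine ⟨hirrefl, fun hab hba => hab (hsymm _ _ hba), fun hab hbc hac => ?_⟩
  exact (hcotrans _ _ hac _).elim hab fun hcb => hbc (hsymm _ _ hcb)

theorem IsApartness.not_of_eqvGen {A r : X → X → Prop} (hA : IsApartness A)
    (hr : ∀ a b, r a b → ¬ A a b) {x y : X} (h : Relation.EqvGen r x y) : ¬ A x y :=
  hA.equivalence_compl.eqvGen_iff.mp (h.mono hr)

theorem isApartness_compl_eqvGen (r : X → X → Prop) :
    IsApartness fun a b => ¬ Relation.EqvGen r a b := by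
  refine ⟨fun a h => h (.refl a), fun a b hab hba => hab hba.symm, fun a b hab c => ?_⟩
  by_contra! h
  exact hab (h.1.trans _ _ _ h.2.symm)

theorem apartnessInterior_iff_not_eqvGen_compl (S : X → X → Prop) {x y : X} :
    apartnessInterior S x y ↔ ¬ Relation.EqvGen (fun a b => ¬ S a b) x y := by
  constructor
  · rintro ⟨A, hA, hAS, hxy⟩ h
    exact hA.not_of_eqvGen (fun a b hab hA => hab (hAS a b hA)) h hxy
  · intro h
    refine ⟨_, isApartness_compl_eqvGen _, fun a b hab => ?_, h⟩
    by_contra hS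
    exact hab (.rel a b hS)

end

/-- The equivalence closure of the complement of the symmetric closure of `R`
equals the complement of the apartness interior of the symmetric closure of `R`. -/
theorem eqvGen_compl_symmClosure_eq_compl_apartnessInterior {X : Type*}
    (R : X → X → Prop) :
    ∀ x y, Relation.EqvGen (fun a b => ¬ (R a b ∨ R b a)) x y ↔
      ¬ apartnessInterior (fun a b => R a b ∨ R b a) x y := by
  intro x y
  rw [apartnessInterior_iff_not_eqvGen_compl, not_not]
end

section
/- For the powerset functor: given a relation R on X, sets S, T ⊆ X satisfy q_R[S] ≠ q_R[T] (images under the quotient map of the equivalence closure of the complement of R's symmetric closure differ) if and only if there exists s ∈ S such that every t ∈ T is related to s by the apartness interior of R^s, or there exists t ∈ T such that every s ∈ S is related to t by the apartness interior of R^s. -/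
/-- Powerset case: with `E` the equivalence closure of the complement of the symmetric
closure of `R`, the images `q_E[S]` and `q_E[T]` differ iff some element of `S` is
apart (in the apartness interior of `R^s`, i.e. the complement of `E`) from every
element of `T`, or vice versa. -/
theorem powerset_image_ne_iff {X : Type*} (R : X → X → Prop) (S T : Set X) :
    Quot.mk (Relation.EqvGen fun a b => ¬ (R a b ∨ R b a)) '' S ≠
      Quot.mk (Relation.EqvGen fun a b => ¬ (R a b ∨ R b a)) '' T ↔
    (∃ s ∈ S, ∀ t ∈ T, ¬ Relation.EqvGen (fun a b => ¬ (R a b ∨ R b a)) s t) ∨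
    (∃ t ∈ T, ∀ s ∈ S, ¬ Relation.EqvGen (fun a b => ¬ (R a b ∨ R b a)) s t) := by
  set f : X → X → Prop := fun a b => ¬ (R a b ∨ R b a) with hf
  have hE : Equivalence (Relation.EqvGen f) := Relation.EqvGen.is_equivalence f
  have key : ∀ x y : X, Quot.mk (Relation.EqvGen f) x = Quot.mk (Relation.EqvGen f) y ↔
      Relation.EqvGen f x y := by
    intro x y
    rw [Quot.eq, hE.eqvGen_iff]
  constructor
  · intro hne
    by_contra h
    push_neg at h
    obtain ⟨h1, h2⟩ := h
    apply hne
    ext q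
    simp only [Set.mem_image]
    constructor
    · rintro ⟨s, hs, rfl⟩
      obtain ⟨t, ht, hst⟩ := h1 s hs
      exact ⟨t, ht, ((key s t).mpr hst).symm⟩
    · rintro ⟨t, ht, rfl⟩
      obtain ⟨s, hs, hst⟩ := h2 t ht
      exact ⟨s, hs, (key s t).mpr hst⟩
  · rintro (⟨s, hs, h⟩ | ⟨t, ht, h⟩) heq
    · have : Quot.mk (Relation.EqvGen f) s ∈ Quot.mk (Relation.EqvGen f) '' T := by
        rw [← heq]; exact ⟨s, hs, rfl⟩
      obtain ⟨t, ht, htq⟩ := this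
      exact h t ht (hE.symm ((key t s).mp htq))
    · have : Quot.mk (Relation.EqvGen f) t ∈ Quot.mk (Relation.EqvGen f) '' S := by
        rw [heq]; exact ⟨t, ht, rfl⟩
      obtain ⟨s, hs, hsq⟩ := this
      exact h s hs ((key s t).mp hsq)
end

section
/- Soundness of the apartness proof rule for labelled transition systems: the least relation # closed under the two rules [x →ᵃ x' and ∀ y', y →ᵃ y' implies x' # y' imply x # y] and its symmetric variant, is contained in the complement of bisimilarity (the greatest bisimulation). -/
/-- A bisimulation on an LTS `γ : X → A → Set X`. -/
def IsBisimulation {X A : Type*} (γ : X → A → Set X) (R : X → X → Prop) : Prop :=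
  ∀ x y, R x y →
    (∀ a, ∀ x' ∈ γ x a, ∃ y' ∈ γ y a, R x' y') ∧
    (∀ a, ∀ y' ∈ γ y a, ∃ x' ∈ γ x a, R x' y')

/-- Bisimilarity: the union of all bisimulations. -/
def Bisimilar {X A : Type*} (γ : X → A → Set X) (x y : X) : Prop :=
  ∃ R : X → X → Prop, IsBisimulation γ R ∧ R x y

/-- Apartness for an LTS, defined inductively by the two proof rules. -/
inductive LtsApart {X A : Type*} (γ : X → A → Set X) : X → X → Prop
  | left (x y : X) (a : A) (x' : X) (hx : x' ∈ γ x a)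
      (h : ∀ y' ∈ γ y a, LtsApart γ x' y') : LtsApart γ x y
  | right (x y : X) (a : A) (y' : X) (hy : y' ∈ γ y a)
      (h : ∀ x' ∈ γ x a, LtsApart γ x' y') : LtsApart γ x y

/-- Soundness: apart states are not bisimilar. -/
theorem ltsApart_sound {X A : Type*} (γ : X → A → Set X) (x y : X)
    (h : LtsApart γ x y) : ¬ Bisimilar γ x y := by
  induction h with
  | left x y a x' hx hsucc ih =>
    rintro ⟨R, hR, hxy⟩
    obtain ⟨y', hy', hR'⟩ := (hR x y hxy).1 a x' hx
    exact ih y' hy' ⟨R, hR, hR'⟩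
  | right x y a y' hy hsucc ih =>
    rintro ⟨R, hR, hxy⟩
    obtain ⟨x', hx', hR'⟩ := (hR x y hxy).2 a y' hy
    exact ih x' hx' ⟨R, hR, hR'⟩
end

section
/- Completeness of cobisimilarity for image-finite LTSs: if the state space and all successor sets are finite, then any two non-bisimilar states are related by the least relation closed under the apartness rules for LTSs. -/
theorem isBisimulation_not_ltsApart {X A : Type*} (γ : X → A → Set X) :
    IsBisimulation γ (fun u v => ¬ LtsApart γ u v) := by
  intro u v huv
  constructor
  · intro a x' hx'
    by_contra! hall
    exact huv (.left u v a x' hx' hall)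
  · intro a y' hy'
    by_contra! hall
    exact huv (.right u v a y' hy' hall)

theorem ltsApart_complete_general {X A : Type*}
    (γ : X → A → Set X) (x y : X) (h : ¬ Bisimilar γ x y) : LtsApart γ x y := by
  by_contra hxy
  exact h ⟨_, isBisimulation_not_ltsApart γ, hxy⟩

/-- Completeness for finite LTSs: non-bisimilar states are apart. -/
theorem ltsApart_complete {X A : Type*} [Finite X] [Finite A]
    (γ : X → A → Set X) (x y : X) (h : ¬ Bisimilar γ x y) : LtsApart γ x y :=
  ltsApart_complete_general γ x y h
end
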